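/- Let Y be a disjunction-of-conjunctions gate over disjoint blocks B_1,…,B_K, and let v ∈ {0,1}^n be an actual input state with at least one block all-ones in v. Then a nonempty occurrence x = v|S has actual effect {Y = 1} (i.e., α_e(x) > 0) if and only if v_i = 1 for every i ∈ S and either S contains no complete block B_j, or S is exactly equal to a single block B_j. Every other nonempty occurrence — in particular any occurrence fixing an input to 0, and any all-ones occurrence that properly contains a complete block (overdetermination) — is reducible, α_e(x) ≤ 0. -/

import Mathlib

open Finset

/-- Disjunction-of-conjunctions gate over blocks `B 1, …, B K`: outputs `1` iff some block has
all of its inputs in state `1`. -/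
def DOC {n K : ℕ} (B : Fin K → Finset (Fin n)) (u : Fin n → Bool) : Bool :=
  decide (∃ j, ∀ i ∈ B j, u i = true)

/-- Effect probability `π(y | v|S) = 2^{-(n-|S|)} · #{u : u agrees with v on S ∧ Y u = y}`. -/
noncomputable def effProb {n : ℕ} (Y : (Fin n → Bool) → Bool) (v : Fin n → Bool)
    (S : Finset (Fin n)) (y : Bool) : ℝ :=
  ((univ.filter fun u : Fin n → Bool => (∀ i ∈ S, u i = v i) ∧ Y u = y).card : ℝ) /
    2 ^ (n - S.card)

/-- Irreducible effect ratio of a nonempty occurrence `v|S` on outcome `y`: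
`α_e = log₂( π(y | v|S) / max_{T ⊊ S} π(y | v|T) )`. -/
noncomputable def alphaE {n : ℕ} (Y : (Fin n → Bool) → Bool) (v : Fin n → Bool)
    (S : Finset (Fin n)) (hS : S.Nonempty) (y : Bool) : ℝ :=
  Real.logb 2 (effProb Y v S y /
    S.ssubsets.sup' ⟨∅, Finset.empty_mem_ssubsets hS⟩ (fun T => effProb Y v T y))

/-!
Overriding a uniformly random state `u` by `v` on `S` turns `π(y | v|S)` into the probability that
`Y (S.piecewise v u) = y`, so occurrences can be compared state by state. The gate `DOC` is
monotone: fixing an input to `1` can only raise `π(1 | ·)` and fixing it to `0` can only lower it.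
Hence a zero in `S` can be dropped, and a block strictly inside `S` already has `π = 1`; either
way a proper part of `S` does at least as well. If `S` is all ones and contains no block, then for
`T ⊂ S` and `a ∈ S \ T` the state that is `1` exactly on the block of `a` minus `a` is switched on
by `v|S` but not by `v|T`. If `S` is a block, `π(1 | v|S) = 1`, while every proper part of it
leaves the all-zero state switched off.
-/

open Function

section Counting

variable {ι β γ : Type*} [Fintype ι] [DecidableEq ι] [Fintype β] [DecidableEq β]

theorem card_filter_piecewise_eq (S : Finset ι) (v w : ι → β) (hw : ∀ i ∈ S, w i = v i) :
    #{u : ι → β | S.piecewise v u = w} = Fintype.card β ^ #S := by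
  have : ({u : ι → β | S.piecewise v u = w} : Finset _) =
      Fintype.piFinset fun i => if i ∈ S then univ else {w i} := by
    ext u
    simp only [mem_filter, mem_univ, true_and, Fintype.mem_piFinset, funext_iff,
      Finset.piecewise]
    refine forall_congr' fun i => ?_
    by_cases hi : i ∈ S <;> simp [hi, hw i, eq_comm]
  rw [this, Fintype.card_piFinset]
  simp [apply_ite card, prod_ite_mem]

theorem card_filter_comp_piecewise [DecidableEq γ] (S : Finset ι) (v : ι → β) (Y : (ι → β) → γ)
    (y : γ) :
    #{u | Y (S.piecewise v u) = y} =
      #{u | (∀ i ∈ S, u i = v i) ∧ Y u = y} * Fintype.card β ^ #S := by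
  rw [card_eq_sum_card_fiberwise (f := fun u => S.piecewise v u)
    (t := {w | (∀ i ∈ S, w i = v i) ∧ Y w = y})]
  · refine sum_const_nat fun w hw => ?_
    simp only [mem_filter, mem_univ, true_and] at hw
    rw [← card_filter_piecewise_eq S v w hw.1]
    congr 1
    ext u
    simp only [mem_filter, mem_univ, true_and, and_iff_right_iff_imp]
    rintro rfl
    exact hw.2
  · intro u hu
    simp only [coe_filter, mem_univ, true_and, Set.mem_ofPred_eq] at hu ⊢
    exact ⟨fun i hi => piecewise_eq_of_mem _ _ _ hi, hu⟩

end Counting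

theorem effProb_eq_card_piecewise {n : ℕ} (Y : (Fin n → Bool) → Bool) (v : Fin n → Bool)
    (S : Finset (Fin n)) (y : Bool) :
    effProb Y v S y = #{u | Y (S.piecewise v u) = y} / 2 ^ n := by
  have hS : #S ≤ n := by simpa using card_le_univ S
  have h2 : (2 : ℝ) ^ n = 2 ^ (n - #S) * 2 ^ #S := by rw [← pow_add, Nat.sub_add_cancel hS]
  rw [card_filter_comp_piecewise, effProb, Fintype.card_bool, h2, Nat.cast_mul, Nat.cast_pow,
    Nat.cast_ofNat, mul_div_mul_right _ _ (by positivity)]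
  congr!

section EffProb

variable {n : ℕ} {Y : (Fin n → Bool) → Bool} {v : Fin n → Bool} {S T : Finset (Fin n)}
  {y : Bool}

theorem effProb_nonneg : 0 ≤ effProb Y v S y := by
  unfold effProb
  positivity

theorem effProb_le_one : effProb Y v S y ≤ 1 := by
  rw [effProb_eq_card_piecewise, div_le_one (by positivity)]
  exact_mod_cast (card_filter_le _ _).trans_eq (by simp)

theorem effProb_eq_one (h : ∀ u, Y (S.piecewise v u) = y) : effProb Y v S y = 1 := by
  rw [effProb_eq_card_piecewise, div_eq_one_iff_eq (by positivity), filter_true_of_mem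
    fun u _ => h u]
  simp

theorem effProb_lt_one {u : Fin n → Bool} (hu : Y (S.piecewise v u) ≠ y) :
    effProb Y v S y < 1 := by
  rw [effProb_eq_card_piecewise, div_lt_one (by positivity)]
  exact_mod_cast (card_lt_card (filter_ssubset.2 ⟨u, mem_univ u, hu⟩)).trans_eq (by simp)

theorem effProb_pos (hv : Y v = y) : 0 < effProb Y v S y := by
  rw [effProb_eq_card_piecewise]
  have : 0 < #{u | Y (S.piecewise v u) = y} := card_pos.2 ⟨v, by simpa [piecewise_same]⟩
  positivity

theorem effProb_le_effProb (h : ∀ u, Y (T.piecewise v u) = y → Y (S.piecewise v u) = y) :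
    effProb Y v T y ≤ effProb Y v S y := by
  simp only [effProb_eq_card_piecewise]
  gcongr ?_ / _
  exact_mod_cast card_le_card (monotone_filter_right _ fun u _ => h u)

theorem effProb_lt_effProb (h : ∀ u, Y (T.piecewise v u) = y → Y (S.piecewise v u) = y)
    {u : Fin n → Bool} (hT : Y (T.piecewise v u) ≠ y) (hS : Y (S.piecewise v u) = y) :
    effProb Y v T y < effProb Y v S y := by
  simp only [effProb_eq_card_piecewise]
  gcongr ?_ / _
  refine mod_cast card_lt_card <|
    (ssubset_iff_of_subset (monotone_filter_right _ fun u _ => h u)).2 ⟨u, ?_, ?_⟩ <;> simpa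

end EffProb

section Monotone

variable {n : ℕ} {v : Fin n → Bool} {S T : Finset (Fin n)}

theorem piecewise_le_piecewise_of_subset (hTS : T ⊆ S) (hv : ∀ i ∈ S, v i = true)
    (u : Fin n → Bool) : T.piecewise v u ≤ S.piecewise v u := by
  intro i
  by_cases hiT : i ∈ T
  · simp [hiT, hTS hiT]
  · by_cases hiS : i ∈ S <;> simp [hiT, hiS, hv]

theorem piecewise_le_piecewise_erase {i : Fin n} (hvi : v i = false) (u : Fin n → Bool) :
    S.piecewise v u ≤ (S.erase i).piecewise v u := by
  intro k
  by_cases hk : k = i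
  · subst hk
    by_cases hkS : k ∈ S <;> simp [hkS, hvi]
  · by_cases hkS : k ∈ S <;> simp [hkS, hk]

theorem Monotone.effProb_le {Y : (Fin n → Bool) → Bool} (hY : Monotone Y)
    (h : ∀ u, T.piecewise v u ≤ S.piecewise v u) :
    effProb Y v T true ≤ effProb Y v S true :=
  effProb_le_effProb fun u hu => Bool.le_iff_imp.1 (hY (h u)) hu

end Monotone

section DOC

variable {n K : ℕ} {B : Fin K → Finset (Fin n)} {v : Fin n → Bool} {S T : Finset (Fin n)}

theorem DOC_eq_true_iff {u : Fin n → Bool} : DOC B u = true ↔ ∃ j, ∀ i ∈ B j, u i = true :=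
  decide_eq_true_iff

theorem monotone_DOC : Monotone (DOC B) := by
  intro u u' h
  rw [Bool.le_iff_imp, DOC_eq_true_iff, DOC_eq_true_iff]
  rintro ⟨j, hj⟩
  exact ⟨j, fun i hi => Bool.le_iff_imp.1 (h i) (hj i hi)⟩

theorem effProb_DOC_of_block {j : Fin K} (hv : ∀ i ∈ B j, v i = true) :
    effProb (DOC B) v (B j) true = 1 :=
  effProb_eq_one fun _ => DOC_eq_true_iff.2 ⟨j, fun i hi => by simp [hi, hv i hi]⟩

theorem effProb_DOC_lt_one_of_ssubset_block (hne : ∀ j, (B j).Nonempty)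
    (hdisj : Pairwise (Disjoint on B)) {j : Fin K} (hT : T ⊂ B j) :
    effProb (DOC B) v T true < 1 := by
  refine effProb_lt_one (u := fun _ => false) fun hon => ?_
  obtain ⟨j', hj'⟩ := DOC_eq_true_iff.1 hon
  have hj'T : B j' ⊆ T := fun i hi => by
    by_contra hiT
    simpa [hiT] using hj' i hi
  obtain rfl : j' = j := by
    by_contra hne'
    obtain ⟨x, hx⟩ := hne j'
    exact disjoint_left.1 (hdisj hne') hx (hT.subset (hj'T hx))
  exact hT.not_subset hj'T

theorem effProb_DOC_lt_of_ssubset (hdisj : Pairwise (Disjoint on B))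
    (hcover : ∀ i, ∃ j, i ∈ B j) (hv : ∀ i ∈ S, v i = true) (hS : ∀ j, ¬B j ⊆ S)
    (hT : T ⊂ S) : effProb (DOC B) v T true < effProb (DOC B) v S true := by
  obtain ⟨a, haS, haT⟩ := exists_of_ssubset hT
  obtain ⟨j₀, ha⟩ := hcover a
  refine effProb_lt_effProb (u := fun i => decide (i ∈ (B j₀).erase a))
    (fun u => Bool.le_iff_imp.1 (monotone_DOC (piecewise_le_piecewise_of_subset hT.subset hv u)))
    ?_ ?_
  · intro hon
    obtain ⟨j, hj⟩ := DOC_eq_true_iff.1 hon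
    have hj₀ : j ≠ j₀ := by
      rintro rfl
      simpa [haT] using hj a ha
    refine hS j fun i hi => ?_
    by_contra hiS
    have hiT : i ∉ T := fun h => hiS (hT.subset h)
    simpa [hiT, disjoint_left.1 (hdisj hj₀) hi] using hj i hi
  · refine DOC_eq_true_iff.2 ⟨j₀, fun i hi => ?_⟩
    by_cases hiS : i ∈ S
    · simp [hiS, hv i hiS]
    · have hia : i ≠ a := by
        rintro rfl
        exact hiS haS
      simp [hiS, hia, hi]

end DOC

section AlphaE

variable {n : ℕ} {Y : (Fin n → Bool) → Bool} {v : Fin n → Bool} {S : Finset (Fin n)}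
  {y : Bool}

theorem alphaE_pos (hS : S.Nonempty) (h₀ : 0 < effProb Y v ∅ y)
    (h : ∀ T ⊂ S, effProb Y v T y < effProb Y v S y) : 0 < alphaE Y v S hS y := by
  have hmax : 0 < S.ssubsets.sup' ⟨∅, empty_mem_ssubsets hS⟩ (fun T => effProb Y v T y) :=
    h₀.trans_le (le_sup' (fun T => effProb Y v T y) (empty_mem_ssubsets hS))
  refine Real.logb_pos one_lt_two ((one_lt_div hmax).2 ((sup'_lt_iff _).2 fun T hT => ?_))
  exact h T (mem_ssubsets.1 hT)

theorem alphaE_nonpos (hS : S.Nonempty) {T : Finset (Fin n)} (hT : T ⊂ S)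
    (h : effProb Y v S y ≤ effProb Y v T y) : alphaE Y v S hS y ≤ 0 := by
  have hmax : effProb Y v T y ≤
      S.ssubsets.sup' ⟨∅, empty_mem_ssubsets hS⟩ (fun T => effProb Y v T y) :=
    le_sup' (fun T => effProb Y v T y) (mem_ssubsets.2 hT)
  exact Real.logb_nonpos one_lt_two (div_nonneg effProb_nonneg (effProb_nonneg.trans hmax))
    (div_le_one_of_le₀ (h.trans hmax) (effProb_nonneg.trans hmax))

end AlphaE

theorem doc_actual_effects_of_on_state_general (n K : ℕ)
    (B : Fin K → Finset (Fin n)) (hBne : ∀ j, (B j).Nonempty)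
    (hBdisj : ∀ j j', j ≠ j' → Disjoint (B j) (B j'))
    (hBcover : ∀ i : Fin n, ∃ j, i ∈ B j)
    (v : Fin n → Bool) (hv : ∃ j, ∀ i ∈ B j, v i = true)
    (S : Finset (Fin n)) (hS : S.Nonempty) :
    (0 < alphaE (DOC B) v S hS true ↔
      (∀ i ∈ S, v i = true) ∧ ((∀ j, ¬ B j ⊆ S) ∨ ∃ j, S = B j)) ∧
    (¬ ((∀ i ∈ S, v i = true) ∧ ((∀ j, ¬ B j ⊆ S) ∨ ∃ j, S = B j)) →
      alphaE (DOC B) v S hS true ≤ 0) := by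
  have hdisj : Pairwise (Disjoint on B) := fun j j' => hBdisj j j'
  have h₀ : 0 < effProb (DOC B) v ∅ true := effProb_pos (DOC_eq_true_iff.2 hv)
  refine (fun hpos hneg => ⟨⟨fun h => by_contra fun hP => (hneg hP).not_gt h, hpos⟩, hneg⟩) ?_ ?_
  · rintro ⟨hv1, hS' | ⟨j, rfl⟩⟩
    · exact alphaE_pos hS h₀ fun T hT => effProb_DOC_lt_of_ssubset hdisj hBcover hv1 hS' hT
    · refine alphaE_pos hS h₀ fun T hT => ?_
      rw [effProb_DOC_of_block hv1]
      exact effProb_DOC_lt_one_of_ssubset_block hBne hdisj hT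
  · intro hP
    by_cases hv1 : ∀ i ∈ S, v i = true
    · have hblock : ¬((∀ j, ¬B j ⊆ S) ∨ ∃ j, S = B j) := fun h => hP ⟨hv1, h⟩
      push Not at hblock
      obtain ⟨⟨j, hjS⟩, hjne⟩ := hblock
      exact alphaE_nonpos hS (hjS.ssubset_of_ne (hjne j).symm)
        (effProb_le_one.trans_eq (effProb_DOC_of_block fun i hi => hv1 i (hjS hi)).symm)
    · push Not at hv1
      obtain ⟨i, hi, hvi⟩ := hv1
      exact alphaE_nonpos hS (erase_ssubset hi) (monotone_DOC.effProb_le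
        (piecewise_le_piecewise_erase (Bool.eq_false_iff.2 hvi)))

/-- For a DOC gate with at least one block all-ones in `v` (so `Y = 1`), a nonempty occurrence
`v|S` has actual effect `{Y = 1}` (`α_e > 0`) iff all inputs fixed by `S` are in state `1` and
either `S` contains no complete block or `S` equals a single block. Every other nonempty
occurrence — in particular any occurrence fixing an input to `0`, and any all-ones occurrence
properly containing a complete block (overdetermination) — is reducible (`α_e ≤ 0`). -/
theorem doc_actual_effects_of_on_state (n K : ℕ) (hK : 1 ≤ K)
    (B : Fin K → Finset (Fin n)) (hBne : ∀ j, (B j).Nonempty)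
    (hBdisj : ∀ j j', j ≠ j' → Disjoint (B j) (B j'))
    (hBcover : ∀ i : Fin n, ∃ j, i ∈ B j)
    (v : Fin n → Bool) (hv : ∃ j, ∀ i ∈ B j, v i = true)
    (S : Finset (Fin n)) (hS : S.Nonempty) :
    (0 < alphaE (DOC B) v S hS true ↔
      (∀ i ∈ S, v i = true) ∧ ((∀ j, ¬ B j ⊆ S) ∨ ∃ j, S = B j)) ∧
    (¬ ((∀ i ∈ S, v i = true) ∧ ((∀ j, ¬ B j ⊆ S) ∨ ∃ j, S = B j)) →
      alphaE (DOC B) v S hS true ≤ 0) :=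
  doc_actual_effects_of_on_state_general n K B hBne hBdisj hBcover v hv S hS
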